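/- Let Q ∈ ℝ^{m×m} be symmetric positive definite, q ∈ ℝ^m, G ∈ ℝ^{n×m}, b ∈ ℝ^n, and ρ ∈ ℝ^n with ρ_i > 0 for all i. Set M = G Q⁻¹ Gᵀ, r = G Q⁻¹ q + b, H = diag(ρ) M diag(ρ), and h = diag(ρ)(Mρ + 2r). If z* is a global minimizer of the scaled box-constrained QP min_{z∈ℝ^n} ½zᵀHz + hᵀz subject to −e ≤ z ≤ e (where e is the all-ones vector), then y* = −Q⁻¹(q + ½Gᵀ(ρ z* + ρ)) is a global minimizer of the vector ℓ1-penalty objective φ_ρ(y) = ½yᵀQy + qᵀy + Σ_{i=1}^n ρ_i max(0, (Gy − b)_i), where ρ z* denotes the componentwise (Hadamard) product. -/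

import Mathlib

/-! With `w = ρ(z* + e)/2 ∈ [0, ρ]` we have `y* = -Q⁻¹(q + Gᵀw)`, and the definitions of `M`, `r`,
`H`, `h` make the gradient `Hz* + h` of the box QP equal to `-2ρs` with `s = Gy* - b`. The
first-order conditions of the box QP at `z*` therefore give `w_i = ρ_i` where `s_i > 0` and
`w_i = 0` where `s_i < 0`, i.e. `w_i s_i = ρ_i max(0, s_i)`. Now `y*` minimizes the Lagrangian
`L(y) = ½yᵀQy + qᵀy + wᵀ(Gy - b)`, which lies below `φ_ρ` because `0 ≤ w ≤ ρ` and agrees with it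
at `y*` by complementarity. -/

open Matrix Finset Filter Topology

lemma nonneg_of_forall_mul_add_sq_mul_nonneg {γ a T : ℝ} (hT : 0 < T)
    (h : ∀ t, 0 < t → t ≤ T → 0 ≤ t * γ + t ^ 2 * a) : 0 ≤ γ := by
  have hlim : Tendsto (fun t : ℝ => γ + t * a) (𝓝[>] 0) (𝓝 γ) := by
    have hcont : Continuous (fun t : ℝ => γ + t * a) := by fun_prop
    simpa using (hcont.tendsto 0).mono_left nhdsWithin_le_nhds
  refine ge_of_tendsto hlim ?_
  filter_upwards [Ioc_mem_nhdsGT hT] with t ⟨ht0, htT⟩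
  refine nonneg_of_mul_nonneg_right ?_ ht0
  calc 0 ≤ t * γ + t ^ 2 * a := h t ht0 htT
    _ = t * (γ + t * a) := by ring

lemma mul_eq_mul_max_zero_of_complementary {w ρ s : ℝ} (hpos : 0 < s → w = ρ)
    (hneg : s < 0 → w = 0) : w * s = ρ * max 0 s := by
  rcases lt_trichotomy s 0 with hs | rfl | hs
  · rw [hneg hs, max_eq_left hs.le, zero_mul, mul_zero]
  · simp
  · rw [hpos hs, max_eq_right hs.le]

lemma mul_le_mul_max_zero {w ρ : ℝ} (hw : 0 ≤ w) (hwρ : w ≤ ρ) (s : ℝ) :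
    w * s ≤ ρ * max 0 s :=
  (mul_le_mul_of_nonneg_left (le_max_right 0 s) hw).trans
    (mul_le_mul_of_nonneg_right hwρ (le_max_left 0 s))

section

variable {ι κ : Type*}

lemma add_single_mem_Icc [DecidableEq ι] {x l u : ι → ℝ} (hx : x ∈ Set.Icc l u) {i : ι} {t : ℝ}
    (ht : x i + t ∈ Set.Icc (l i) (u i)) : x + Pi.single i t ∈ Set.Icc l u := by
  constructor <;> intro j <;> rcases eq_or_ne j i with rfl | hj
  all_goals simp_all [hx.1 j, hx.2 j]

variable [Fintype ι] [Fintype κ]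

noncomputable def quadObj (A : Matrix ι ι ℝ) (c x : ι → ℝ) : ℝ := 1 / 2 * (x ⬝ᵥ A *ᵥ x) + c ⬝ᵥ x

lemma quadObj_add_single [DecidableEq ι] {A : Matrix ι ι ℝ} (hA : A.IsSymm) (c x : ι → ℝ)
    (i : ι) (t : ℝ) :
    quadObj A c (x + Pi.single i t) = quadObj A c x + t * (A *ᵥ x + c) i + t ^ 2 * (A i i / 2) := by
  have hx : x ⬝ᵥ A *ᵥ Pi.single i t = t * (A *ᵥ x) i := by
    rw [dotProduct_mulVec, ← mulVec_transpose, hA.eq, dotProduct_single, mul_comm]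
  simp only [quadObj, mulVec_add, dotProduct_add, add_dotProduct]
  rw [hx]
  simp only [single_dotProduct, dotProduct_single, mulVec_single, Pi.add_apply,
    Pi.smul_apply, col_apply, op_smul_eq_mul]
  ring

lemma quadObj_le_of_mulVec_add_eq_zero {A : Matrix ι ι ℝ} (hA : A.PosSemidef) {c x₀ : ι → ℝ}
    (hx₀ : A *ᵥ x₀ + c = 0) (x : ι → ℝ) : quadObj A c x₀ ≤ quadObj A c x := by
  have hc : c = -(A *ᵥ x₀) := eq_neg_of_add_eq_zero_right hx₀
  have hsymm : x₀ ⬝ᵥ A *ᵥ x = x ⬝ᵥ A *ᵥ x₀ := by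
    rw [dotProduct_mulVec, ← mulVec_transpose, (isHermitian_iff_isSymm.mp hA.isHermitian).eq,
      dotProduct_comm]
  have hexp : quadObj A c x - quadObj A c x₀ = 1 / 2 * ((x - x₀) ⬝ᵥ A *ᵥ (x - x₀)) := by
    simp only [quadObj, hc, mulVec_sub, dotProduct_sub, sub_dotProduct, neg_dotProduct,
      dotProduct_comm (A *ᵥ x₀), hsymm]
    ring
  have := hA.dotProduct_mulVec_nonneg (x - x₀)
  simp only [star_trivial] at this
  linarith

lemma quadObj_add_dotProduct_sub (A : Matrix ι ι ℝ) (c x : ι → ℝ) (G : Matrix κ ι ℝ)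
    (w b : κ → ℝ) :
    quadObj A c x + w ⬝ᵥ (G *ᵥ x - b) = quadObj A (c + Gᵀ *ᵥ w) x - w ⬝ᵥ b := by
  simp only [quadObj, dotProduct_sub, dotProduct_mulVec, mulVec_transpose, add_dotProduct]
  ring

section BoxConstrained

variable [DecidableEq ι] {A : Matrix ι ι ℝ} {c x : ι → ℝ}

lemma IsMinOn.mul_grad_quadObj_nonneg (hA : A.IsSymm) {S : Set (ι → ℝ)}
    (hmin : IsMinOn (quadObj A c) S x) {i : ι} {d T : ℝ} (hT : 0 < T)
    (hS : ∀ t, 0 < t → t ≤ T → x + Pi.single i (t * d) ∈ S) : 0 ≤ d * (A *ᵥ x + c) i := by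
  refine nonneg_of_forall_mul_add_sq_mul_nonneg (a := d ^ 2 * (A i i / 2)) hT fun t ht0 htT => ?_
  have := isMinOn_iff.mp hmin _ (hS t ht0 htT)
  rw [quadObj_add_single hA] at this
  linarith

lemma IsMinOn.apply_eq_upper_of_grad_quadObj_neg (hA : A.IsSymm) {l u : ι → ℝ}
    (hmin : IsMinOn (quadObj A c) (Set.Icc l u) x) (hx : x ∈ Set.Icc l u) {i : ι}
    (hi : (A *ᵥ x + c) i < 0) : x i = u i := by
  refine (hx.2 i).antisymm (not_lt.mp fun hlt => ?_)
  have := hmin.mul_grad_quadObj_nonneg hA (d := 1) (sub_pos.mpr hlt) fun t ht0 htT =>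
    add_single_mem_Icc hx ⟨by linarith [hx.1 i], by linarith⟩
  linarith

lemma IsMinOn.apply_eq_lower_of_grad_quadObj_pos (hA : A.IsSymm) {l u : ι → ℝ}
    (hmin : IsMinOn (quadObj A c) (Set.Icc l u) x) (hx : x ∈ Set.Icc l u) {i : ι}
    (hi : 0 < (A *ᵥ x + c) i) : x i = l i := by
  refine ((hx.1 i).antisymm (not_lt.mp fun hlt => ?_)).symm
  have := hmin.mul_grad_quadObj_nonneg hA (d := -1) (sub_pos.mpr hlt) fun t ht0 htT =>
    add_single_mem_Icc hx ⟨by linarith, by linarith [hx.2 i]⟩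
  linarith

lemma mul_eq_mul_max_zero_of_isMinOn_quadObj (hA : A.IsSymm)
    (hmin : IsMinOn (quadObj A c) (Set.Icc (-1) 1) x) (hx : x ∈ Set.Icc (-1) 1) {ρ s : ι → ℝ}
    (hρ : ∀ i, 0 < ρ i) (hgrad : ∀ i, (A *ᵥ x + c) i = -2 * (ρ i * s i)) (i : ι) :
    1 / 2 * (ρ i * x i + ρ i) * s i = ρ i * max 0 (s i) := by
  refine mul_eq_mul_max_zero_of_complementary (fun hs => ?_) (fun hs => ?_)
  · have hxi : x i = 1 := hmin.apply_eq_upper_of_grad_quadObj_neg hA hx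
      (by rw [hgrad]; linarith [mul_pos (hρ i) hs])
    rw [hxi]
    ring
  · have hxi : x i = -1 := hmin.apply_eq_lower_of_grad_quadObj_pos hA hx
      (by rw [hgrad]; linarith [mul_neg_of_pos_of_neg (hρ i) hs])
    rw [hxi]
    ring

end BoxConstrained

noncomputable def l1PenaltyObj (Q : Matrix ι ι ℝ) (q : ι → ℝ) (G : Matrix κ ι ℝ) (b ρ : κ → ℝ)
    (y : ι → ℝ) : ℝ :=
  quadObj Q q y + ∑ i, ρ i * max 0 ((G *ᵥ y - b) i)

theorem l1PenaltyObj_le_of_kkt {Q : Matrix ι ι ℝ} (hQ : Q.PosSemidef) {q y₀ : ι → ℝ}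
    {G : Matrix κ ι ℝ} {b ρ w : κ → ℝ} (hstat : Q *ᵥ y₀ + (q + Gᵀ *ᵥ w) = 0)
    (hw : ∀ i, 0 ≤ w i ∧ w i ≤ ρ i)
    (hcompl : ∀ i, w i * (G *ᵥ y₀ - b) i = ρ i * max 0 ((G *ᵥ y₀ - b) i)) (y : ι → ℝ) :
    l1PenaltyObj Q q G b ρ y₀ ≤ l1PenaltyObj Q q G b ρ y := by
  calc l1PenaltyObj Q q G b ρ y₀ = quadObj Q q y₀ + w ⬝ᵥ (G *ᵥ y₀ - b) := by
        simp only [l1PenaltyObj, dotProduct, hcompl]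
    _ = quadObj Q (q + Gᵀ *ᵥ w) y₀ - w ⬝ᵥ b := quadObj_add_dotProduct_sub ..
    _ ≤ quadObj Q (q + Gᵀ *ᵥ w) y - w ⬝ᵥ b :=
        sub_le_sub_right (quadObj_le_of_mulVec_add_eq_zero hQ hstat y) _
    _ = quadObj Q q y + w ⬝ᵥ (G *ᵥ y - b) := (quadObj_add_dotProduct_sub ..).symm
    _ ≤ l1PenaltyObj Q q G b ρ y :=
        add_le_add_right (sum_le_sum fun i _ => mul_le_mul_max_zero (hw i).1 (hw i).2 _) _

lemma scaledBoxQP_grad_eq [DecidableEq κ] (P : Matrix ι ι ℝ) (G : Matrix κ ι ℝ) (q : ι → ℝ)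
    (b ρ z : κ → ℝ) :
    (diagonal ρ * (G * P * Gᵀ) * diagonal ρ) *ᵥ z
        + diagonal ρ *ᵥ ((G * P * Gᵀ) *ᵥ ρ + (2 : ℝ) • (G *ᵥ (P *ᵥ q) + b))
      = -(2 : ℝ) • (ρ * (G *ᵥ -(P *ᵥ (q + Gᵀ *ᵥ ((1 / 2 : ℝ) • (ρ * z + ρ)))) - b)) := by
  have hdiag : ∀ v, diagonal ρ *ᵥ v = ρ * v := fun v => funext (mulVec_diagonal ρ v)
  ext i
  simp only [← mulVec_mulVec, hdiag, mulVec_add, mulVec_neg, mulVec_smul, Pi.add_apply,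
    Pi.neg_apply, Pi.smul_apply, Pi.sub_apply, Pi.mul_apply, smul_eq_mul]
  ring

end

/-- if `z*` globally minimizes the scaled box-constrained QP
`min ½zᵀHz + hᵀz, −e ≤ z ≤ e` with `H = diag(ρ) M diag(ρ)`, `h = diag(ρ)(Mρ + 2r)`,
`M = G Q⁻¹ Gᵀ`, `r = G Q⁻¹ q + b`, then `y* = −Q⁻¹(q + ½Gᵀ(ρz* + ρ))` globally minimizes
the vector ℓ1-penalty objective `φ_ρ`. -/
theorem scaled_boxQP_recovers_l1_penalty {m n : ℕ}
    (Q : Matrix (Fin m) (Fin m) ℝ) (hQ : Q.PosDef)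
    (q : Fin m → ℝ) (G : Matrix (Fin n) (Fin m) ℝ) (b : Fin n → ℝ)
    (ρ : Fin n → ℝ) (hρ : ∀ i, 0 < ρ i)
    (M : Matrix (Fin n) (Fin n) ℝ) (hM : M = G * Q⁻¹ * Gᵀ)
    (r : Fin n → ℝ) (hr : r = G.mulVec (Q⁻¹.mulVec q) + b)
    (H : Matrix (Fin n) (Fin n) ℝ) (hH : H = Matrix.diagonal ρ * M * Matrix.diagonal ρ)
    (h : Fin n → ℝ) (hh : h = (Matrix.diagonal ρ).mulVec (M.mulVec ρ + (2 : ℝ) • r))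
    (φρ : (Fin m → ℝ) → ℝ)
    (hφρ : φρ = fun y => (1/2) * (y ⬝ᵥ Q.mulVec y) + q ⬝ᵥ y
        + ∑ i, ρ i * max 0 (G.mulVec y i - b i))
    (zstar : Fin n → ℝ)
    (hzbox : ∀ i, -1 ≤ zstar i ∧ zstar i ≤ 1)
    (hzmin : ∀ z : Fin n → ℝ, (∀ i, -1 ≤ z i ∧ z i ≤ 1) →
      (1/2) * (zstar ⬝ᵥ H.mulVec zstar) + h ⬝ᵥ zstar ≤
        (1/2) * (z ⬝ᵥ H.mulVec z) + h ⬝ᵥ z)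
    (ystar : Fin m → ℝ)
    (hy : ystar = -(Q⁻¹.mulVec (q + (1/2 : ℝ) • Gᵀ.mulVec (fun i => ρ i * zstar i + ρ i)))) :
    ∀ y, φρ ystar ≤ φρ y := by
  set w : Fin n → ℝ := (1 / 2 : ℝ) • (ρ * zstar + ρ) with hw
  have hys : ystar = -(Q⁻¹ *ᵥ (q + Gᵀ *ᵥ w)) := by rw [hy, mulVec_smul]; rfl
  have hstat : Q *ᵥ ystar + (q + Gᵀ *ᵥ w) = 0 := by
    rw [hys, mulVec_neg, mulVec_mulVec, mul_nonsing_inv Q ((isUnit_iff_isUnit_det Q).mp hQ.isUnit),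
      one_mulVec, neg_add_cancel]
  have hgrad : ∀ i, (H *ᵥ zstar + h) i = -2 * (ρ i * (G *ᵥ ystar - b) i) := fun i => by
    rw [hH, hh, hM, hr, hys, hw]
    exact congrFun (scaledBoxQP_grad_eq _ _ _ _ _ _) i
  have hHsymm : H.IsSymm := by
    have := (hQ.inv.posSemidef.mul_mul_conjTranspose_same G).conjTranspose_mul_mul_same
      (diagonal ρ)
    simpa [hH, hM] using this.isHermitian
  have hzIcc : zstar ∈ Set.Icc (-1) 1 := ⟨fun i => (hzbox i).1, fun i => (hzbox i).2⟩
  have hmin : IsMinOn (quadObj H h) (Set.Icc (-1) 1) zstar :=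
    isMinOn_iff.mpr fun z hz => hzmin z fun i => ⟨hz.1 i, hz.2 i⟩
  subst hφρ
  refine l1PenaltyObj_le_of_kkt hQ.posSemidef hstat (fun i => ?_)
    (mul_eq_mul_max_zero_of_isMinOn_quadObj hHsymm hmin hzIcc hρ hgrad)
  simp only [hw, Pi.smul_apply, Pi.add_apply, Pi.mul_apply, smul_eq_mul]
  constructor <;> nlinarith [hzbox i, hρ i]
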